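/- arXiv:2102.01664 — 5 statements merged into one kernel-verified Lean document; each statement's English description precedes it below -/
import Mathlib

section
/- Let G and K be groups and let S be a subgroup of the free product G ∗ K. If the word length function of G ∗ K (with respect to the free product decomposition) is bounded on S, then S is conjugate in G ∗ K to a subgroup of G or to a subgroup of K. -/
/-!
Identify `G ∗ K` with the `Bool`-indexed free product of its two factors and induct on a bound
`n` for the word length on `S`. If `|s| ≥ 2` and the powers of `s` have bounded length, the
reduced word of `s` reads `a w a⁻¹` for a letter `a`: otherwise `s`, or its conjugate by its last
letter, is cyclically reduced, and the length of its powers grows linearly. Take `t = a w a⁻¹ ∈ S`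
of maximal length `n ≥ 2`. For `s ∈ S`, the product `t s` is longer than `t` unless `s` starts
with `a` (when `|s| ≥ 2`) or is a letter of the factor of `a` (when `|s| = 1`). So conjugating by
`a⁻¹` brings all lengths in `S` below `n`. Once all lengths are at most `1`, two nontrivial
letters from different factors would multiply to an element of length `2`, so `S` lies in a
single factor.
-/

theorem Subgroup.map_map_conj {G : Type*} [Group G] (S : Subgroup G) (z z' : G) :
    (S.map (MulAut.conj z).toMonoidHom).map (MulAut.conj z').toMonoidHom =
      S.map (MulAut.conj (z' * z)).toMonoidHom := by
  rw [Subgroup.map_map]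
  congr 1
  ext x
  simp [mul_assoc]

namespace Monoid.CoprodI

variable {ι : Type*} {M : ι → Type*}

section Monoid

variable [∀ i, Monoid (M i)]

def IsReduced (L : List (Σ i, M i)) : Prop :=
  (∀ l ∈ L, l.2 ≠ 1) ∧ L.IsChain fun l l' => l.1 ≠ l'.1

def letterProd (L : List (Σ i, M i)) : CoprodI M :=
  (L.map fun l => of l.2).prod

@[simp]
theorem letterProd_nil : letterProd ([] : List (Σ i, M i)) = 1 := rfl

@[simp]
theorem letterProd_cons (l : Σ i, M i) (L : List (Σ i, M i)) :
    letterProd (l :: L) = of l.2 * letterProd L := List.prod_cons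

@[simp]
theorem letterProd_append (L₁ L₂ : List (Σ i, M i)) :
    letterProd (L₁ ++ L₂) = letterProd L₁ * letterProd L₂ := by
  simp [letterProd]

theorem isReduced_cons {l : Σ i, M i} {L : List (Σ i, M i)} :
    IsReduced (l :: L) ↔ l.2 ≠ 1 ∧ (∀ l' ∈ L.head?, l.1 ≠ l'.1) ∧ IsReduced L := by
  simp only [IsReduced, List.mem_cons, List.isChain_cons, forall_eq_or_imp]
  tauto

theorem isReduced_append {L₁ L₂ : List (Σ i, M i)} :
    IsReduced (L₁ ++ L₂) ↔
      IsReduced L₁ ∧ IsReduced L₂ ∧ ∀ p ∈ L₁.getLast?, ∀ q ∈ L₂.head?, p.1 ≠ q.1 := by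
  simp only [IsReduced, List.mem_append, List.isChain_append]
  grind

theorem isReduced_singleton {l : Σ i, M i} : IsReduced [l] ↔ l.2 ≠ 1 := by
  simp [IsReduced]

variable [DecidableEq ι] [∀ i, DecidableEq (M i)]

def letters (x : CoprodI M) : List (Σ i, M i) := (Word.equiv x).toList

def wordLength (x : CoprodI M) : ℕ := (letters x).length

theorem isReduced_letters (x : CoprodI M) : IsReduced (letters x) :=
  ⟨(Word.equiv x).ne_one, (Word.equiv x).chain_ne⟩

@[simp]
theorem letterProd_letters (x : CoprodI M) : letterProd (letters x) = x :=
  Word.equiv.symm_apply_apply x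

theorem letters_letterProd {L : List (Σ i, M i)} (h : IsReduced L) :
    letters (letterProd L) = L :=
  congrArg Word.toList (Word.equiv.apply_symm_apply ⟨L, h.1, h.2⟩)

theorem wordLength_letterProd {L : List (Σ i, M i)} (h : IsReduced L) :
    wordLength (letterProd L) = L.length := by
  rw [wordLength, letters_letterProd h]

@[simp]
theorem letters_one : letters (1 : CoprodI M) = [] :=
  letters_letterProd (L := []) (by simp [IsReduced])

@[simp]
theorem wordLength_one : wordLength (1 : CoprodI M) = 0 := by
  simp [wordLength]

theorem wordLength_eq_zero_iff {x : CoprodI M} : wordLength x = 0 ↔ x = 1 := by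
  refine ⟨fun h => ?_, fun h => by simp [h]⟩
  rw [← letterProd_letters x, List.eq_nil_of_length_eq_zero h, letterProd_nil]

theorem letters_of {i : ι} {m : M i} (hm : m ≠ 1) : letters (of m) = [⟨i, m⟩] := by
  simpa using letters_letterProd (isReduced_singleton (l := ⟨i, m⟩) |>.2 hm)

theorem wordLength_of_le {i : ι} (m : M i) : wordLength (of m) ≤ 1 := by
  by_cases hm : m = 1
  · simp [hm]
  · simp [wordLength, letters_of hm]

theorem letters_mul_of_ne {x y : CoprodI M}
    (h : ∀ p ∈ (letters x).getLast?, ∀ q ∈ (letters y).head?, p.1 ≠ q.1) :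
    letters (x * y) = letters x ++ letters y := by
  conv_lhs => rw [← letterProd_letters x, ← letterProd_letters y, ← letterProd_append]
  exact letters_letterProd (isReduced_append.2 ⟨isReduced_letters x, isReduced_letters y, h⟩)

theorem wordLength_mul_of_ne {x y : CoprodI M}
    (h : ∀ p ∈ (letters x).getLast?, ∀ q ∈ (letters y).head?, p.1 ≠ q.1) :
    wordLength (x * y) = wordLength x + wordLength y := by
  simp [wordLength, letters_mul_of_ne h]

theorem letters_mul_of_mul_ne_one {x y : CoprodI M} {X Y : List (Σ i, M i)} {i : ι} {a b : M i}
    (hx : letters x = X ++ [⟨i, a⟩]) (hy : letters y = ⟨i, b⟩ :: Y) (hab : a * b ≠ 1) :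
    letters (x * y) = X ++ ⟨i, a * b⟩ :: Y := by
  have hX := isReduced_letters x
  have hY := isReduced_letters y
  rw [hx, isReduced_append] at hX
  rw [hy, isReduced_cons] at hY
  have hxy : x * y = letterProd (X ++ ⟨i, a * b⟩ :: Y) := by
    rw [← letterProd_letters x, ← letterProd_letters y, hx, hy]
    simp [mul_assoc]
  rw [hxy, letters_letterProd]
  refine isReduced_append.2 ⟨hX.1, isReduced_cons.2 ⟨hab, hY.2.1, hY.2.2⟩, ?_⟩
  simpa using fun p hp => hX.2.2 p hp ⟨i, a⟩ rfl

theorem wordLength_of_mul_le {i : ι} (m : M i) (y : CoprodI M) :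
    wordLength (of m * y) ≤ wordLength y + 1 := by
  by_cases hm : m = 1
  · simp [hm]
  rcases hy : letters y with _ | ⟨⟨j, b⟩, Y⟩
  · rw [← letterProd_letters y, hy, letterProd_nil, mul_one]
    exact (wordLength_of_le m).trans (by simp)
  have hlen : wordLength y = Y.length + 1 := by simp [wordLength, hy]
  rw [hlen]
  by_cases hij : i = j
  · subst hij
    by_cases hmb : m * b = 1
    · have hY := (isReduced_cons.1 (hy ▸ isReduced_letters y)).2.2
      rw [← letterProd_letters y, hy, letterProd_cons, ← mul_assoc, ← map_mul, hmb, map_one,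
        one_mul, wordLength_letterProd hY]
      omega
    · rw [wordLength, letters_mul_of_mul_ne_one (X := []) (letters_of hm) hy hmb]
      simp
  · rw [wordLength, letters_mul_of_ne (by simp [letters_of hm, hy, hij]), letters_of hm, hy]
    simp

theorem wordLength_letterProd_mul_le (L : List (Σ i, M i)) (y : CoprodI M) :
    wordLength (letterProd L * y) ≤ L.length + wordLength y := by
  induction L with
  | nil => simp
  | cons l L ih =>
    rw [letterProd_cons, mul_assoc, List.length_cons]
    exact (wordLength_of_mul_le _ _).trans (by omega)

theorem wordLength_letterProd_le (L : List (Σ i, M i)) : wordLength (letterProd L) ≤ L.length := by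
  simpa using wordLength_letterProd_mul_le L 1

theorem wordLength_mul_le (x y : CoprodI M) : wordLength (x * y) ≤ wordLength x + wordLength y := by
  have h := wordLength_letterProd_mul_le (letters x) y
  rwa [letterProd_letters] at h

theorem wordLength_list_prod_le (l : List (CoprodI M)) :
    wordLength l.prod ≤ (l.map wordLength).sum := by
  induction l with
  | nil => simp
  | cons x l ih =>
    rw [List.prod_cons, List.map_cons, List.sum_cons]
    exact (wordLength_mul_le _ _).trans (by omega)

theorem letters_letterProd_pow {L : List (Σ i, M i)} (hL : IsReduced L)
    (hcyc : ∀ p ∈ L.getLast?, ∀ q ∈ L.head?, p.1 ≠ q.1) (k : ℕ) :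
    letters (letterProd L ^ k) = (List.replicate k L).flatten := by
  by_cases hne : L = []
  · simp [hne]
  induction k with
  | zero => simp
  | succ k ih =>
    have hjoin : ∀ p ∈ L.getLast?, ∀ q ∈ (List.replicate k L).flatten.head?, p.1 ≠ q.1 := by
      intro p hp q hq
      cases k with
      | zero => simp at hq
      | succ k =>
        rw [List.replicate_succ, List.flatten_cons, List.head?_append_of_ne_nil _ hne] at hq
        exact hcyc p hp q hq
    rw [pow_succ', letters_mul_of_ne (by rwa [letters_letterProd hL, ih]), letters_letterProd hL,
      ih, List.replicate_succ, List.flatten_cons]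

theorem wordLength_letterProd_pow {L : List (Σ i, M i)} (hL : IsReduced L)
    (hcyc : ∀ p ∈ L.getLast?, ∀ q ∈ L.head?, p.1 ≠ q.1) (k : ℕ) :
    wordLength (letterProd L ^ k) = k * L.length := by
  simp [wordLength, letters_letterProd_pow hL hcyc]

end Monoid

section Group

variable [DecidableEq ι] [∀ i, Group (M i)] [∀ i, DecidableEq (M i)]

theorem exists_letters_eq_conj {s : CoprodI M} {n : ℕ} (hpow : ∀ k, wordLength (s ^ k) ≤ n)
    (hs : 2 ≤ wordLength s) :
    ∃ (i : ι) (a : M i) (mid : List (Σ i, M i)), letters s = ⟨i, a⟩ :: (mid ++ [⟨i, a⁻¹⟩]) := by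
  obtain ⟨⟨i, a⟩, mid, ⟨j, b⟩, hs_eq⟩ : ∃ x mid y, letters s = x :: (mid ++ [y]) := by
    rcases hL : letters s with _ | ⟨x, rest⟩
    · simp [wordLength, hL] at hs
    rcases rest.eq_nil_or_concat' with rfl | ⟨mid, y, rfl⟩
    · simp [wordLength, hL] at hs
    exact ⟨x, mid, y, rfl⟩
  have hred := isReduced_letters s
  rw [hs_eq] at hred
  by_cases hij : i = j
  swap
  · -- `s` is cyclically reduced, so its powers grow linearly
    have hcyc : ∀ p ∈ (letters s).getLast?, ∀ q ∈ (letters s).head?, p.1 ≠ q.1 := by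
      rw [hs_eq, ← List.cons_append, List.getLast?_concat]
      simp [Ne.symm hij]
    have h := wordLength_letterProd_pow (isReduced_letters s) hcyc (n + 1)
    rw [letterProd_letters] at h
    have := hpow (n + 1)
    change _ = _ * wordLength s at h
    nlinarith
  subst hij
  by_cases hba : b * a = 1
  · exact ⟨i, a, mid, by rw [hs_eq, eq_inv_of_mul_eq_one_left hba]⟩
  -- otherwise conjugating by `b` merges the two end letters into a cyclically reduced word
  exfalso
  rw [isReduced_cons, isReduced_append, isReduced_singleton] at hred
  obtain ⟨ha, hhead, hmid, hb, hlast⟩ := hred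
  have hmid_ne : mid ≠ [] := by
    rintro rfl
    simp at hhead
  have hL : IsReduced (⟨i, b * a⟩ :: mid) := by
    refine isReduced_cons.2 ⟨hba, fun q hq => ?_, hmid⟩
    exact hhead q (by rwa [List.head?_append_of_ne_nil _ hmid_ne])
  have hcyc : ∀ p ∈ (⟨i, b * a⟩ :: mid).getLast?, ∀ q ∈ (⟨i, b * a⟩ :: mid).head?,
      p.1 ≠ q.1 := by
    intro p hp q hq
    rw [List.getLast?_cons_of_ne_nil hmid_ne] at hp
    simp only [List.head?_cons, Option.mem_def, Option.some.injEq] at hq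
    subst hq
    exact hlast p hp ⟨i, b⟩ rfl
  have hconj : of b * s * (of b)⁻¹ = letterProd (⟨i, b * a⟩ :: mid) := by
    rw [← letterProd_letters s, hs_eq]
    simp [mul_assoc]
  have hpow' := wordLength_letterProd_pow hL hcyc (n + 3)
  rw [← hconj, conj_pow, ← map_inv] at hpow'
  have hle := (wordLength_mul_le _ _).trans
    (Nat.add_le_add (wordLength_mul_le (of b) (s ^ (n + 3))) (wordLength_of_le b⁻¹))
  have := hpow (n + 3)
  have := wordLength_of_le b
  simp only [List.length_cons] at hpow'
  nlinarith

section Longest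

variable {S : Subgroup (CoprodI M)} {t : CoprodI M} {i : ι} {c : M i}

theorem mem_range_of_of_wordLength_eq_one (ht : t ∈ S)
    (hmax : ∀ s ∈ S, wordLength s ≤ wordLength t) (hlast : (letters t).getLast? = some ⟨i, c⟩)
    {s : CoprodI M} (hs : s ∈ S) (hs1 : wordLength s = 1) :
    s ∈ (of : M i →* CoprodI M).range := by
  obtain ⟨⟨j, b⟩, hs_eq⟩ := List.length_eq_one_iff.1 hs1
  have hsb : s = of b := by rw [← letterProd_letters s, hs_eq]; simp
  by_cases hij : i = j
  · subst hij
    exact ⟨b, hsb.symm⟩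
  have h := wordLength_mul_of_ne (x := t) (y := s) (by simp [hlast, hs_eq, hij])
  have := hmax _ (mul_mem ht hs)
  omega

theorem letters_head?_eq_inv (ht : t ∈ S)
    (hmax : ∀ s ∈ S, wordLength s ≤ wordLength t) (hlast : (letters t).getLast? = some ⟨i, c⟩)
    {s : CoprodI M} (hs : s ∈ S) (hs2 : 2 ≤ wordLength s) :
    (letters s).head? = some ⟨i, c⁻¹⟩ := by
  rcases hs_eq : letters s with _ | ⟨⟨j, b⟩, rest⟩
  · simp [wordLength, hs_eq] at hs2
  have hts := hmax _ (mul_mem ht hs)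
  have hlen : wordLength s = rest.length + 1 := by simp [wordLength, hs_eq]
  by_cases hij : i = j
  · subst hij
    by_cases hcb : c * b = 1
    · simp [← eq_inv_of_mul_eq_one_right hcb]
    have ht_eq := (List.dropLast_append_getLast? _ hlast).symm
    have h := congrArg List.length (letters_mul_of_mul_ne_one ht_eq hs_eq hcb)
    have := congrArg List.length ht_eq
    simp only [List.length_append, List.length_cons, List.length_nil] at h this
    change wordLength (t * s) = _ at h
    change wordLength t = _ at this
    omega
  · have h := wordLength_mul_of_ne (x := t) (y := s) (by simp [hlast, hs_eq, hij])
    omega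

theorem exists_forall_map_conj_wordLength_lt (ht : t ∈ S)
    (hmax : ∀ s ∈ S, wordLength s ≤ wordLength t) (ht2 : 2 ≤ wordLength t) :
    ∃ z : CoprodI M, ∀ s ∈ S.map (MulAut.conj z).toMonoidHom, wordLength s < wordLength t := by
  have hpow : ∀ s ∈ S, ∀ k, wordLength (s ^ k) ≤ wordLength t :=
    fun s hs k => hmax _ (pow_mem hs k)
  obtain ⟨i, a, mid, ht_eq⟩ := exists_letters_eq_conj (hpow t ht) ht2
  have hlast : (letters t).getLast? = some ⟨i, a⁻¹⟩ := by
    rw [ht_eq, ← List.cons_append, List.getLast?_concat]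
  refine ⟨(of a)⁻¹, ?_⟩
  rintro _ ⟨s, hs, rfl⟩
  change wordLength ((of a)⁻¹ * s * (of a)⁻¹⁻¹) < wordLength t
  rw [inv_inv]
  obtain hs0 | hs1 | hs2 : wordLength s = 0 ∨ wordLength s = 1 ∨ 2 ≤ wordLength s := by omega
  · rw [wordLength_eq_zero_iff.1 hs0, mul_one, inv_mul_cancel, wordLength_one]
    omega
  · obtain ⟨b, rfl⟩ := mem_range_of_of_wordLength_eq_one ht hmax hlast hs hs1
    rw [← map_inv, ← map_mul, ← map_mul]
    exact (wordLength_of_le _).trans_lt (by omega)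
  · obtain ⟨j, b, mid', hs_eq⟩ := exists_letters_eq_conj (hpow s hs) hs2
    have hhead := letters_head?_eq_inv ht hmax hlast hs hs2
    rw [hs_eq, inv_inv, List.head?_cons, Option.some.injEq] at hhead
    cases hhead
    have hconj : (of a)⁻¹ * s * of a = letterProd mid' := by
      rw [← letterProd_letters s, hs_eq]
      simp [mul_assoc]
    have hlen : wordLength s = mid'.length + 2 := by simp [wordLength, hs_eq]
    have := hmax s hs
    rw [hconj]
    exact (wordLength_letterProd_le mid').trans_lt (by omega)

end Longest

theorem exists_le_range_of_of_forall_wordLength_le_one [Nonempty ι] {S : Subgroup (CoprodI M)}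
    (hS : ∀ s ∈ S, wordLength s ≤ 1) : ∃ i, S ≤ (of : M i →* CoprodI M).range := by
  by_cases h : ∃ t ∈ S, wordLength t = 1
  · obtain ⟨t, ht, ht1⟩ := h
    obtain ⟨⟨i, c⟩, ht_eq⟩ := List.length_eq_one_iff.1 ht1
    refine ⟨i, fun s hs => ?_⟩
    obtain hs0 | hs1 : wordLength s = 0 ∨ wordLength s = 1 := by have := hS s hs; omega
    · rw [wordLength_eq_zero_iff.1 hs0]
      exact one_mem _
    · exact mem_range_of_of_wordLength_eq_one ht (c := c) (fun s hs => ht1 ▸ hS s hs)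
        (by simp [ht_eq]) hs hs1
  · push Not at h
    refine ⟨Classical.arbitrary ι, fun s hs => ?_⟩
    rw [(wordLength_eq_zero_iff (x := s)).1 (by have := hS s hs; have := h s hs; omega)]
    exact one_mem _

theorem exists_map_conj_le_range_of [Nonempty ι] (S : Subgroup (CoprodI M)) (n : ℕ)
    (hS : ∀ s ∈ S, wordLength s ≤ n) :
    ∃ (i : ι) (z : CoprodI M),
      S.map (MulAut.conj z).toMonoidHom ≤ (of : M i →* CoprodI M).range := by
  induction n using Nat.strong_induction_on generalizing S with
  | _ n ih =>
  by_cases hn : n ≤ 1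
  · obtain ⟨i, hi⟩ :=
      exists_le_range_of_of_forall_wordLength_le_one fun s hs => (hS s hs).trans hn
    refine ⟨i, 1, ?_⟩
    rintro _ ⟨s, hs, rfl⟩
    simpa using hi hs
  by_cases ht : ∃ t ∈ S, wordLength t = n
  · obtain ⟨t, ht, rfl⟩ := ht
    obtain ⟨z, hz⟩ := exists_forall_map_conj_wordLength_lt ht hS (by omega)
    obtain ⟨i, z', hz'⟩ :=
      ih _ (Nat.pred_lt (by omega)) _ fun s hs => Nat.le_pred_of_lt (hz s hs)
    exact ⟨i, z' * z, by rwa [Subgroup.map_map_conj] at hz'⟩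
  · push Not at ht
    exact ih _ (Nat.pred_lt (by omega)) S fun s hs =>
      Nat.le_pred_of_lt ((hS s hs).lt_of_ne (ht s hs))

end Group

end Monoid.CoprodI

namespace Monoid.Coprod

open scoped Monoid.Coprod

variable {G K : Type*} [Group G] [Group K]

-- The factors as subgroups of `G ∗ K`, so that they form a `Bool`-indexed family in one universe.
variable (G K) in
def factor (b : Bool) : Subgroup (G ∗ K) :=
  cond b (inl : G →* G ∗ K).range (inr : K →* G ∗ K).range

def toCoprodI : G ∗ K →* CoprodI fun b => factor G K b :=
  lift ((CoprodI.of (i := true)).comp (inl : G →* G ∗ K).rangeRestrict)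
    ((CoprodI.of (i := false)).comp (inr : K →* G ∗ K).rangeRestrict)

def ofCoprodI : (CoprodI fun b => factor G K b) →* G ∗ K :=
  CoprodI.lift fun b => (factor G K b).subtype

@[simp]
theorem ofCoprodI_of {b : Bool} (m : factor G K b) : ofCoprodI (CoprodI.of m) = m :=
  CoprodI.lift_of (fun b => (factor G K b).subtype) m

@[simp]
theorem ofCoprodI_toCoprodI (x : G ∗ K) : ofCoprodI (toCoprodI x) = x := by
  suffices h : ofCoprodI.comp toCoprodI = MonoidHom.id (G ∗ K) from DFunLike.congr_fun h x
  apply hom_ext <;> ext <;> exact ofCoprodI_of _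

theorem wordLength_toCoprodI_list_prod_le [∀ b, DecidableEq (factor G K b)] (l : List (G ∗ K))
    (hl : ∀ x ∈ l, (∃ g : G, x = inl g) ∨ (∃ k : K, x = inr k)) :
    CoprodI.wordLength (toCoprodI l.prod) ≤ l.length := by
  rw [map_list_prod]
  refine (CoprodI.wordLength_list_prod_le _).trans ((List.sum_le_card_nsmul _ 1 ?_).trans ?_)
  · simp only [List.mem_map]
    rintro _ ⟨_, ⟨x, hx, rfl⟩, rfl⟩
    rcases hl x hx with ⟨g, rfl⟩ | ⟨k, rfl⟩ <;> exact CoprodI.wordLength_of_le _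
  · simp

theorem map_conj_ofCoprodI_le_factor {S : Subgroup (G ∗ K)} {z : CoprodI fun b => factor G K b}
    {b : Bool}
    (h : (S.map toCoprodI).map (MulAut.conj z).toMonoidHom ≤ (CoprodI.of (i := b)).range) :
    S.map (MulAut.conj (ofCoprodI z)).toMonoidHom ≤ factor G K b := by
  rintro _ ⟨s, hs, rfl⟩
  obtain ⟨m, hm⟩ := h ⟨toCoprodI s, ⟨s, hs, rfl⟩, rfl⟩
  have h := congrArg ofCoprodI hm
  simp only [ofCoprodI_of, MulEquiv.coe_toMonoidHom, MulAut.conj_apply, map_mul, map_inv,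
    ofCoprodI_toCoprodI] at h
  simpa only [MulEquiv.coe_toMonoidHom, MulAut.conj_apply, ← h] using m.2

end Monoid.Coprod

open Monoid.CoprodI Monoid.Coprod in
/-- If the word length function of the free product `G ∗ K` is bounded on a
subgroup `S`, then `S` is conjugate to a subgroup of `G` or of `K`. Boundedness of the word
length by `N` is expressed as: every element of `S` is a product of at most `N` letters,
each letter coming from `G` or from `K`. -/
theorem stmt0 {G K : Type*} [Group G] [Group K] (S : Subgroup (Monoid.Coprod G K)) (N : ℕ)
    (hbound : ∀ s ∈ S, ∃ l : List (Monoid.Coprod G K),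
      (∀ x ∈ l, (∃ g : G, x = Monoid.Coprod.inl g) ∨ (∃ k : K, x = Monoid.Coprod.inr k)) ∧
        l.prod = s ∧ l.length ≤ N) :
    ∃ z : Monoid.Coprod G K,
      S.map (MulAut.conj z).toMonoidHom ≤ (Monoid.Coprod.inl : G →* Monoid.Coprod G K).range ∨
      S.map (MulAut.conj z).toMonoidHom ≤ (Monoid.Coprod.inr : K →* Monoid.Coprod G K).range := by
  classical
  have hS : ∀ s ∈ S.map toCoprodI, wordLength s ≤ N := by
    rintro _ ⟨s, hs, rfl⟩
    obtain ⟨l, hl, rfl, hlen⟩ := hbound s hs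
    exact (wordLength_toCoprodI_list_prod_le l hl).trans hlen
  obtain ⟨b, z, hz⟩ := exists_map_conj_le_range_of _ N hS
  refine ⟨ofCoprodI z, ?_⟩
  cases b
  · exact Or.inr (map_conj_ofCoprodI_le_factor hz)
  · exact Or.inl (map_conj_ofCoprodI_le_factor hz)
end

section
/- Let G₁ be the group of finitely supported even permutations of ℕ that fix the point 1, and let G be the group of all finitely supported even permutations of ℕ. If δ : G₁ → G is a group homomorphism satisfying δ(a) = a for every element a ∈ G₁ of order 2, then δ(σ) = σ for all σ ∈ G₁. -/
/-- A transposition of two distinct points of `ℕ`. -/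
def IsSwapPerm (τ : Equiv.Perm ℕ) : Prop := ∃ a b : ℕ, a ≠ b ∧ τ = Equiv.swap a b

/-- The group of finitely supported even permutations of `ℕ`, realized as the subgroup of
`Equiv.Perm ℕ` of products of an even number of transpositions. -/
def evenFin : Subgroup (Equiv.Perm ℕ) where
  carrier := {σ | ∃ l : List (Equiv.Perm ℕ),
    (∀ τ ∈ l, IsSwapPerm τ) ∧ Even l.length ∧ l.prod = σ}
  one_mem' := ⟨[], by simp, by simp, rfl⟩
  mul_mem' := by
    rintro σ₁ σ₂ ⟨l₁, h₁, e₁, p₁⟩ ⟨l₂, h₂, e₂, p₂⟩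
    refine ⟨l₁ ++ l₂, ?_, ?_, by rw [List.prod_append, p₁, p₂]⟩
    · intro τ hτ
      rcases List.mem_append.1 hτ with h | h
      · exact h₁ τ h
      · exact h₂ τ h
    · simpa using e₁.add e₂
  inv_mem' := by
    rintro σ ⟨l, h, e, p⟩
    refine ⟨(l.map (·⁻¹)).reverse, ?_, by simpa using e, ?_⟩
    · intro τ hτ
      rw [List.mem_reverse, List.mem_map] at hτ
      obtain ⟨τ', hτ', rfl⟩ := hτ
      obtain ⟨a, b, hab, rfl⟩ := h τ' hτ'
      exact ⟨a, b, hab, by simp [Equiv.Perm.inv_def]⟩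
    · rw [← List.prod_inv_reverse, p]

/-- The subgroup of `evenFin` of those permutations fixing `1 ∈ ℕ`. -/
def evenFinFixOne : Subgroup (Equiv.Perm ℕ) :=
  evenFin ⊓ MulAction.stabilizer (Equiv.Perm ℕ) (1 : ℕ)

/-!
The double transpositions `(a b)(c d)` with `1 ∉ {a, b, c, d}` are elements of order 2 that
generate `G₁`; two homomorphisms agreeing on a generating set are equal.

For generation, write `σ ∈ G₁` as a product of an even number of transpositions and pick a point
`M ≠ 1` moved by none of them. Then `(1 M)` commutes with `σ`, and conjugating the factors by it
yields transpositions avoiding `1`. Finally, for `e, f` fresh,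
`(a b)(c d) = ((a b)(e f)) ((e f)(c d))` is a product of two double transpositions.
-/

open Equiv Filter

theorem List.prod_mem_of_even_length {G : Type*} [Group G] {T : Set G} {H : Subgroup G}
    (hT : ∀ x ∈ T, ∀ y ∈ T, x * y ∈ H) :
    ∀ {l : List G}, (∀ x ∈ l, x ∈ T) → Even l.length → l.prod ∈ H
  | [], _, _ => H.one_mem
  | [_], _, hl => absurd hl (by simp)
  | x :: y :: l, hlT, hl => by
    rw [List.prod_cons, List.prod_cons, ← mul_assoc]
    exact H.mul_mem (hT x (hlT x (by simp)) y (hlT y (by simp)))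
      (prod_mem_of_even_length hT (fun z hz => hlT z (by simp [hz]))
        (by simpa [Nat.even_add_one] using hl))

namespace Equiv.Perm

variable {α : Type*} [DecidableEq α]

theorem orderOf_swap {a b : α} (hab : a ≠ b) : orderOf (swap a b) = 2 :=
  orderOf_eq_prime (by rw [sq, swap_mul_self]) (by rwa [Ne, swap_eq_one_iff])

theorem orderOf_swap_mul_swap {a b c d : α} (h : [a, b, c, d].Nodup) :
    orderOf (swap a b * swap c d) = 2 := by
  have hab : a ≠ b := by rintro rfl; simp at h
  have hcd : c ≠ d := by rintro rfl; simp at h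
  rw [(disjoint_swap_swap h).orderOf, orderOf_swap hab, orderOf_swap hcd, Nat.lcm_self]

theorem commute_swap_of_apply_eq {σ : Perm α} {a b : α} (ha : σ a = a) (hb : σ b = b) :
    Commute (swap a b) σ :=
  (by rw [mul_swap_eq_swap_mul, ha, hb] : σ * swap a b = swap a b * σ).symm

end Equiv.Perm

theorem IsSwapPerm.eventually_apply_eq {τ : Perm ℕ} (hτ : IsSwapPerm τ) :
    ∀ᶠ x in atTop, τ x = x := by
  obtain ⟨a, b, -, rfl⟩ := hτ
  filter_upwards [eventually_gt_atTop (max a b)] with x hx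
  exact swap_apply_of_ne_of_ne (by omega) (by omega)

theorem swap_mul_swap_mem_evenFin {a b c d : ℕ} (hab : a ≠ b) (hcd : c ≠ d) :
    swap a b * swap c d ∈ evenFin :=
  ⟨[swap a b, swap c d], by simpa [IsSwapPerm] using ⟨⟨a, b, hab, rfl⟩, ⟨c, d, hcd, rfl⟩⟩,
    by simp, by simp⟩

def involutionsFixOne : Set (Perm ℕ) := {x | x ∈ evenFinFixOne ∧ orderOf x = 2}

theorem swap_mul_swap_mem_involutionsFixOne {a b c d : ℕ} (h : [a, b, c, d].Nodup)
    (h1 : 1 ∉ [a, b, c, d]) : swap a b * swap c d ∈ involutionsFixOne := by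
  have hab : a ≠ b := by rintro rfl; simp at h
  have hcd : c ≠ d := by rintro rfl; simp at h
  simp only [List.mem_cons, List.not_mem_nil, not_or] at h1
  refine ⟨Subgroup.mem_inf.2 ⟨swap_mul_swap_mem_evenFin hab hcd, ?_⟩,
    Perm.orderOf_swap_mul_swap h⟩
  rw [MulAction.mem_stabilizer_iff, Perm.smul_def, Perm.mul_apply,
    swap_apply_of_ne_of_ne h1.2.2.1 h1.2.2.2.1, swap_apply_of_ne_of_ne h1.1 h1.2.1]

theorem swap_mul_swap_mem_closure_involutionsFixOne {a b c d : ℕ} (hab : a ≠ b) (hcd : c ≠ d)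
    (h1 : 1 ∉ [a, b, c, d]) : swap a b * swap c d ∈ Subgroup.closure involutionsFixOne := by
  obtain ⟨e, he⟩ := Infinite.exists_notMem_finset ({1, a, b, c, d} : Finset ℕ)
  obtain ⟨f, hf⟩ := Infinite.exists_notMem_finset ({1, a, b, c, d, e} : Finset ℕ)
  simp only [List.mem_cons, List.not_mem_nil, not_or] at h1
  simp only [Finset.mem_insert, Finset.mem_singleton, not_or] at he hf
  have hsplit : swap a b * swap c d = (swap a b * swap e f) * (swap e f * swap c d) := by
    rw [mul_assoc, ← mul_assoc (swap e f), swap_mul_self, one_mul]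
  rw [hsplit]
  refine Subgroup.mul_mem _ (Subgroup.subset_closure ?_) (Subgroup.subset_closure ?_) <;>
    exact swap_mul_swap_mem_involutionsFixOne (by simp; omega) (by simp; omega)

theorem mem_closure_involutionsFixOne {σ : Perm ℕ} (hσ : σ ∈ evenFinFixOne) :
    σ ∈ Subgroup.closure involutionsFixOne := by
  obtain ⟨⟨l, hl, hev, rfl⟩, h1⟩ := hσ
  obtain ⟨M, hM, hM1⟩ : ∃ M, (∀ τ ∈ l, τ M = M) ∧ M ≠ 1 :=
    (((l.finite_toSet.eventually_all).2 fun τ hτ => (hl τ hτ).eventually_apply_eq).and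
      (eventually_ne_atTop 1)).exists
  have hlM : l.prod M = M :=
    Subgroup.list_prod_mem (K := MulAction.stabilizer (Perm ℕ) M) hM
  have hconj : (l.map (MulAut.conj (swap 1 M))).prod = l.prod := by
    rw [← map_list_prod, MulAut.conj_apply, (Perm.commute_swap_of_apply_eq h1 hlM).eq,
      mul_inv_cancel_right]
  rw [← hconj]
  refine List.prod_mem_of_even_length
    (T := {τ | ∃ a b, a ≠ b ∧ a ≠ 1 ∧ b ≠ 1 ∧ τ = swap a b}) ?_ ?_ (by simpa using hev)
  · rintro _ ⟨a, b, hab, ha, hb, rfl⟩ _ ⟨c, d, hcd, hc, hd, rfl⟩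
    exact swap_mul_swap_mem_closure_involutionsFixOne hab hcd (by simp [*, eq_comm])
  · simp only [List.mem_map]
    rintro _ ⟨τ, hτ, rfl⟩
    obtain ⟨a, b, hab, rfl⟩ := hl τ hτ
    have hM_ab := hM _ hτ
    rw [← not_ne_iff, swap_apply_ne_self_iff] at hM_ab
    have hM_swap : ∀ x, x ≠ M → swap 1 M x ≠ 1 := fun x hx => by
      rwa [Ne, swap_apply_eq_iff, swap_apply_left]
    refine ⟨swap 1 M a, swap 1 M b, by simpa using hab, hM_swap a (by tauto),
      hM_swap b (by tauto), ?_⟩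
    rw [MulAut.conj_apply, swap_apply_apply]

theorem closure_orderOf_eq_two_eq_top :
    Subgroup.closure {a : evenFinFixOne | orderOf a = 2} = ⊤ := by
  refine eq_top_iff.2 fun σ _ => ?_
  obtain ⟨τ, hτ, hτσ⟩ : (σ : Perm ℕ) ∈
      (Subgroup.closure {a : evenFinFixOne | orderOf a = 2}).map evenFinFixOne.subtype := by
    rw [MonoidHom.map_closure]
    refine Subgroup.closure_mono ?_ (mem_closure_involutionsFixOne σ.2)
    rintro x ⟨hx, hx2⟩
    exact ⟨⟨x, hx⟩, by simpa using hx2, rfl⟩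
  rwa [← Subtype.ext hτσ]

/-- If `δ : G₁ → G` is a group homomorphism from the group `G₁` of finitely
supported even permutations of `ℕ` fixing `1` to the group `G` of all finitely supported even
permutations of `ℕ`, and `δ(a) = a` for every element `a` of order `2`, then `δ` is the
identity: `δ(σ) = σ` for all `σ ∈ G₁`. -/
theorem stmt4 (δ : ↥evenFinFixOne →* ↥evenFin)
    (h : ∀ a : ↥evenFinFixOne, orderOf a = 2 → ((δ a : Equiv.Perm ℕ)) = (a : Equiv.Perm ℕ)) :
    ∀ σ : ↥evenFinFixOne, ((δ σ : Equiv.Perm ℕ)) = (σ : Equiv.Perm ℕ) :=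
  DFunLike.congr_fun <| MonoidHom.eq_of_eqOn_dense (f := evenFin.subtype.comp δ)
    (g := evenFinFixOne.subtype) closure_orderOf_eq_two_eq_top h
end

section
/- Let G₁ be the group of finitely supported even permutations of ℕ fixing 1, and G the group of all finitely supported even permutations of ℕ. If δ : G₁ → G is a group homomorphism such that for every element b ∈ G₁ of order 3 one has δ(b) = b or δ(b) = b⁻¹, then δ(σ) = σ for all σ ∈ G₁. -/
/-!
The 3-cycles avoiding `1` generate `G₁`: if `σ ∈ G₁` is a word in transpositions and `n` is a
point no letter moves, then `σ` commutes with `swap 1 n`, and conjugating the word by `swap 1 n`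
gives a word for `σ` whose letters avoid `1`; adjacent pairs of such letters are products of
3-cycles avoiding `1`. So it suffices that `δ t = t` for such a 3-cycle `t`. Since `δ` maps every
element of order 3 to itself or its inverse, `δ g` and `g` have the same fixed points. If
`δ t = t⁻¹` with `t a = c`, `t b = a`, take a 3-cycle `s` through `b` and two fresh points: then
`t s t⁻¹` moves `a`, while `δ (t s t⁻¹) = t⁻¹ (δ s) t` fixes it because `s` fixes `c`.
-/

open Equiv Equiv.Perm Subgroup

section ThreeCycles

variable {α : Type*} [DecidableEq α]

def threeCyclesAvoiding (p : α) : Set (Perm α) :=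
  {σ | ∃ a b c, a ≠ b ∧ a ≠ c ∧ b ≠ c ∧ a ≠ p ∧ b ≠ p ∧ c ≠ p ∧ σ = swap a b * swap a c}

theorem swap_mul_swap_same_pow_three {a b c : α} (hab : a ≠ b) (hac : a ≠ c) (hbc : b ≠ c) :
    (swap a b * swap a c) ^ 3 = 1 := by
  ext x
  simp only [pow_succ, pow_zero, one_mul, Perm.mul_apply, Perm.one_apply]
  by_cases hx : x = a ∨ x = b ∨ x = c
  · rcases hx with rfl | rfl | rfl <;>
      simp [swap_apply_of_ne_of_ne, hbc, hab.symm, hac.symm, hbc.symm]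
  · push Not at hx
    simp [swap_apply_of_ne_of_ne, hx.1, hx.2.1, hx.2.2]

theorem orderOf_swap_mul_swap_same {a b c : α} (hab : a ≠ b) (hac : a ≠ c) (hbc : b ≠ c) :
    orderOf (swap a b * swap a c) = 3 := by
  have : Fact (Nat.Prime 3) := ⟨Nat.prime_three⟩
  refine orderOf_eq_prime (swap_mul_swap_same_pow_three hab hac hbc) fun h => hbc ?_
  simpa [swap_apply_of_ne_of_ne hac.symm hbc.symm] using congr($h c)

theorem Equiv.Perm.IsSwap.conj {σ : Perm α} (hσ : σ.IsSwap) (π : Perm α) :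
    (π * σ * π⁻¹).IsSwap := by
  obtain ⟨a, b, hab, rfl⟩ := hσ
  exact ⟨π a, π b, π.injective.ne hab, (swap_apply_apply π a b).symm⟩

theorem Equiv.Perm.IsSwap.finite_setOf_apply_ne {σ : Perm α} (hσ : σ.IsSwap) :
    {x | σ x ≠ x}.Finite := by
  obtain ⟨a, b, -, rfl⟩ := hσ
  refine (Set.toFinite {a, b}).subset fun x hx => ?_
  simpa using (swap_apply_ne_self_iff.mp hx).2

theorem swap_mul_swap_same_mem_closure_threeCyclesAvoiding {p a b c : α} (hab : a ≠ b)
    (hac : a ≠ c) (ha : a ≠ p) (hb : b ≠ p) (hc : c ≠ p) :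
    swap a b * swap a c ∈ closure (threeCyclesAvoiding p) := by
  by_cases hbc : b = c
  · subst hbc
    simp [one_mem]
  exact subset_closure ⟨a, b, c, hab, hac, hbc, ha, hb, hc, rfl⟩

theorem Equiv.Perm.IsSwap.mul_mem_closure_threeCyclesAvoiding {p : α} {σ τ : Perm α}
    (hσ : σ.IsSwap) (hτ : τ.IsSwap) (hσp : σ p = p) (hτp : τ p = p) :
    σ * τ ∈ closure (threeCyclesAvoiding p) := by
  obtain ⟨a, b, hab, rfl⟩ := hσ
  obtain ⟨c, d, hcd, rfl⟩ := hτ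
  obtain ⟨ha, hb⟩ : a ≠ p ∧ b ≠ p := by
    simpa [eq_comm, hab] using mt swap_apply_ne_self_iff.mpr (not_not.mpr hσp)
  obtain ⟨hc, hd⟩ : c ≠ p ∧ d ≠ p := by
    simpa [eq_comm, hcd] using mt swap_apply_ne_self_iff.mpr (not_not.mpr hτp)
  by_cases hac : a = c
  · subst hac
    exact swap_mul_swap_same_mem_closure_threeCyclesAvoiding hab hcd ha hb hd
  have hsplit : swap a b * swap c d = swap a b * swap a c * (swap c a * swap c d) := by
    simp [swap_comm c a, mul_assoc]
  rw [hsplit]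
  exact mul_mem (swap_mul_swap_same_mem_closure_threeCyclesAvoiding hab hac ha hb hc)
    (swap_mul_swap_same_mem_closure_threeCyclesAvoiding (Ne.symm hac) hcd hc ha hd)

theorem list_prod_mem_closure_threeCyclesAvoiding {p : α} :
    ∀ {l : List (Perm α)}, (∀ τ ∈ l, τ.IsSwap ∧ τ p = p) → Even l.length →
      l.prod ∈ closure (threeCyclesAvoiding p)
  | [], _, _ => one_mem _
  | [_], _, he => by simp at he
  | σ :: τ :: l, hl, he => by
    rw [List.prod_cons, List.prod_cons, ← mul_assoc]
    have hσ := hl σ (by simp)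
    have hτ := hl τ (by simp)
    exact mul_mem (hσ.1.mul_mem_closure_threeCyclesAvoiding hτ.1 hσ.2 hτ.2)
      (list_prod_mem_closure_threeCyclesAvoiding (fun ρ hρ => hl ρ (by simp [hρ]))
        (by simpa [Nat.even_add] using he))

theorem list_prod_mem_closure_threeCyclesAvoiding_of_apply_eq [Infinite α] {p : α}
    {l : List (Perm α)} (hl : ∀ τ ∈ l, τ.IsSwap) (he : Even l.length) (hp : l.prod p = p) :
    l.prod ∈ closure (threeCyclesAvoiding p) := by
  obtain ⟨n, hn⟩ := ((l.finite_toSet.biUnion fun τ hτ =>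
    (hl τ hτ).finite_setOf_apply_ne).insert p).exists_notMem
  simp only [Set.mem_insert_iff, Set.mem_iUnion, Set.mem_ofPred_eq, not_or, not_exists,
    not_not] at hn
  obtain ⟨hnp, hfix⟩ := hn
  have hprod_n : l.prod n = n :=
    (MulAction.stabilizer (Perm α) n).list_prod_mem fun τ hτ => hfix τ hτ
  have hcomm : MulAut.conj (swap p n) l.prod = l.prod := by
    have h := swap_apply_apply l.prod p n
    rw [hp, hprod_n, eq_mul_inv_iff_mul_eq] at h
    rw [MulAut.conj_apply, h, mul_inv_cancel_right]
  rw [← hcomm, map_list_prod]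
  refine list_prod_mem_closure_threeCyclesAvoiding ?_ (by simpa using he)
  simp only [List.mem_map]
  rintro _ ⟨τ, hτ, rfl⟩
  refine ⟨(hl τ hτ).conj _, ?_⟩
  simp [MulAut.conj_apply, hfix τ hτ]

end ThreeCycles

theorem MonoidHom.eq_of_eqOn_of_le_closure {G M : Type*} [Group G] [Monoid M]
    {H : Subgroup G} {S : Set G} (hSH : S ⊆ H) (hH : H ≤ closure S) {f g : H →* M}
    (hfg : ∀ x : H, (x : G) ∈ S → f x = g x) : f = g := by
  ext x
  have hle : closure S ≤ (eqLocus f g).map H.subtype :=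
    (closure_le _).2 fun s hs => ⟨⟨s, hSH hs⟩, hfg _ hs, rfl⟩
  obtain ⟨y, hy, hyx⟩ := hle (hH x.2)
  rwa [Subtype.ext hyx] at hy

theorem evenFinFixOne_le_closure_threeCyclesAvoiding :
    evenFinFixOne ≤ closure (threeCyclesAvoiding 1) := by
  rintro σ ⟨⟨l, hl, he, rfl⟩, hσ⟩
  exact list_prod_mem_closure_threeCyclesAvoiding_of_apply_eq hl he hσ

theorem threeCyclesAvoiding_one_subset_evenFinFixOne :
    threeCyclesAvoiding 1 ⊆ (evenFinFixOne : Set (Perm ℕ)) := by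
  rintro _ ⟨a, b, c, hab, hac, -, ha, hb, hc, rfl⟩
  refine ⟨⟨[swap a b, swap a c], ?_, even_two, by simp⟩, ?_⟩
  · simpa using ⟨⟨a, b, hab, rfl⟩, ⟨a, c, hac, rfl⟩⟩
  · show (swap a b * swap a c) 1 = 1
    simp [swap_apply_of_ne_of_ne, Ne.symm ha, Ne.symm hb, Ne.symm hc]

theorem coe_map_apply_eq_self_iff (δ : evenFinFixOne →* evenFin)
    (h : ∀ b : evenFinFixOne, orderOf b = 3 →
      (δ b : Perm ℕ) = (b : Perm ℕ) ∨ (δ b : Perm ℕ) = (b : Perm ℕ)⁻¹)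
    {g : evenFinFixOne} (hg : orderOf g = 3) (x : ℕ) :
    (δ g : Perm ℕ) x = x ↔ (g : Perm ℕ) x = x := by
  rcases h g hg with e | e
  · rw [e]
  · rw [e, Perm.inv_eq_iff_eq, eq_comm]

theorem coe_map_eq_of_mem_threeCyclesAvoiding (δ : evenFinFixOne →* evenFin)
    (h : ∀ b : evenFinFixOne, orderOf b = 3 →
      (δ b : Perm ℕ) = (b : Perm ℕ) ∨ (δ b : Perm ℕ) = (b : Perm ℕ)⁻¹)
    (t : evenFinFixOne) (ht : (t : Perm ℕ) ∈ threeCyclesAvoiding 1) :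
    (δ t : Perm ℕ) = t := by
  obtain ⟨a, b, c, hab, hac, hbc, ha, hb, hc, hta⟩ := ht
  have hto : orderOf t = 3 := by
    rw [← Subgroup.orderOf_coe, hta, orderOf_swap_mul_swap_same hab hac hbc]
  refine (h t hto).resolve_right fun hδt => ?_
  obtain ⟨l, m, hbl, hbm, hlm, ham, hcl, hcm, hl, hm⟩ : ∃ l m : ℕ, b ≠ l ∧ b ≠ m ∧ l ≠ m ∧
      a ≠ m ∧ c ≠ l ∧ c ≠ m ∧ l ≠ 1 ∧ m ≠ 1 :=
    ⟨a + b + c + 2, a + b + c + 3, by omega⟩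
  let s : evenFinFixOne := ⟨swap b l * swap b m,
    threeCyclesAvoiding_one_subset_evenFinFixOne ⟨b, l, m, hbl, hbm, hlm, hb, hl, hm, rfl⟩⟩
  have hso : orderOf s = 3 := by
    rw [Subgroup.orderOf_mk, orderOf_swap_mul_swap_same hbl hbm hlm]
  have hgo : orderOf (t * s * t⁻¹) = 3 := (SemiconjBy.conj_mk t s).orderOf_eq.symm.trans hso
  have hsc : (δ s : Perm ℕ) c = c := (coe_map_apply_eq_self_iff δ h hso c).2 <| by
    simp [s, swap_apply_of_ne_of_ne, hbc.symm, hcl, hcm]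
  have hδg : (δ (t * s * t⁻¹) : Perm ℕ) a = a := by
    simp only [map_mul, map_inv, Subgroup.coe_mul, Subgroup.coe_inv, hδt, hta,
      mul_inv_rev, swap_inv, Perm.mul_apply]
    rw [swap_apply_left, swap_apply_of_ne_of_ne hac.symm hbc.symm, hsc,
      swap_apply_of_ne_of_ne hac.symm hbc.symm, swap_apply_right]
  have hg : ((t * s * t⁻¹ : evenFinFixOne) : Perm ℕ) a ≠ a := by
    simp [hta, s, swap_apply_of_ne_of_ne, hab.symm, hbc, hbm.symm, hlm.symm, ham.symm,
      hcm.symm]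
  exact hg ((coe_map_apply_eq_self_iff δ h hgo a).1 hδg)

/-- If `δ : G₁ → G` is a group homomorphism from the group `G₁` of finitely
supported even permutations of `ℕ` fixing `1` to the group `G` of all finitely supported even
permutations of `ℕ`, and for every element `b` of order `3` one has `δ(b) = b` or
`δ(b) = b⁻¹`, then `δ` is the identity: `δ(σ) = σ` for all `σ ∈ G₁`. -/
theorem stmt5 (δ : ↥evenFinFixOne →* ↥evenFin)
    (h : ∀ b : ↥evenFinFixOne, orderOf b = 3 →
      ((δ b : Equiv.Perm ℕ)) = (b : Equiv.Perm ℕ) ∨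
      ((δ b : Equiv.Perm ℕ)) = ((b : Equiv.Perm ℕ))⁻¹) :
    ∀ σ : ↥evenFinFixOne, ((δ σ : Equiv.Perm ℕ)) = (σ : Equiv.Perm ℕ) := by
  have hδ : evenFin.subtype.comp δ = evenFinFixOne.subtype :=
    MonoidHom.eq_of_eqOn_of_le_closure threeCyclesAvoiding_one_subset_evenFinFixOne
      evenFinFixOne_le_closure_threeCyclesAvoiding (coe_map_eq_of_mem_threeCyclesAvoiding δ h)
  exact fun σ => DFunLike.congr_fun hδ σ
end

section
/- Let (I₀, ≤, ∨, 0) be a join-semilattice with 0, Λ a nontrivial group, and G₀ = ∗_{a ∈ I₀} Λ_a the free product of copies Λ_a of Λ indexed by I₀. Define δ₀ : G₀ → I₀ by δ₀(e) = 0 and δ₀(g) = sup F, where F is the finite set of indices a such that a letter from Λ_a \ {e} occurs in the reduced expression of g. Then: (i) δ₀ is a valuation; (ii) δ₀ is surjective; (iii) for all a, b ∈ I₀ there exist g, h ∈ G₀ with δ₀(g) = a, δ₀(h) = b and δ₀(gh) = a ∨ b. -/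
/-!
Multiplying a reduced word by a letter of `Λ_i` only changes, deletes or inserts letters of
`Λ_i`; since every element is the product of the letters of its reduced word, the indices
occurring in `x * y` and in `x⁻¹` are among those occurring in `x` and `y`, which gives (i).
For (ii) and (iii) one evaluates `δ₀` on short reduced words; a letter of `Λ_⊥` placed between
letters of `Λ_a` and `Λ_b` keeps the product reduced even when `a = b`.
-/

/-- The valuation `δ₀` on the free product `G₀ = ∗_{a ∈ I₀} Λ_a` of copies of `Λ` indexed by
`I₀`: `δ₀(g)` is the join of the (finitely many) indices `a` such that a letter from
`Λ_a \ {e}` occurs in the reduced expression of `g` (the empty join being `⊥ = 0`). -/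
noncomputable def delta0 {I₀ : Type*} [SemilatticeSup I₀] [OrderBot I₀] [DecidableEq I₀]
    {Λ : Type*} [Group Λ] [DecidableEq Λ]
    (x : Monoid.CoprodI (fun _ : I₀ => Λ)) : I₀ :=
  ((Monoid.CoprodI.Word.equiv x).toList.map Sigma.fst).foldr (· ⊔ ·) ⊥

open Monoid CoprodI

namespace Monoid.CoprodI.Word

variable {ι : Type*} {M : ι → Type*} [∀ i, Monoid (M i)] [DecidableEq ι] [∀ i, DecidableEq (M i)]

theorem forall_fst_list_prod_smul {p : ι → Prop} {L : List (Σ i, M i)} (hL : ∀ l ∈ L, p l.1)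
    {w : Word M} (hw : ∀ l ∈ w.toList, p l.1) :
    ∀ l ∈ ((L.map fun l => of l.2).prod • w).toList, p l.1 := by
  induction L with
  | nil => simpa using hw
  | cons l L ih =>
    rintro ⟨i, m⟩ hm
    rw [List.map_cons, List.prod_cons, mul_smul, mem_smul_iff] at hm
    rcases hm with ⟨-, hm⟩ | ⟨-, rfl, -⟩
    · exact ih (fun l hl => hL l (List.mem_cons_of_mem _ hl)) _ hm
    · exact hL l List.mem_cons_self

theorem list_prod_equiv (x : CoprodI M) : ((equiv x).toList.map fun l => of l.2).prod = x :=
  equiv.symm_apply_apply x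

end Monoid.CoprodI.Word

section Delta0

variable {I₀ : Type*} [SemilatticeSup I₀] [OrderBot I₀] [DecidableEq I₀]
  {Λ : Type*} [Group Λ] [DecidableEq Λ]

theorem delta0_le_iff {x : CoprodI fun _ : I₀ => Λ} {c : I₀} :
    delta0 x ≤ c ↔ ∀ l ∈ (Word.equiv x).toList, l.1 ≤ c := by
  simp only [delta0, ← Multiset.sup_coe, Multiset.sup_le, Multiset.mem_coe, List.forall_mem_map]

theorem delta0_word_prod (w : Word fun _ : I₀ => Λ) :
    delta0 w.prod = (w.toList.map Sigma.fst).foldr (· ⊔ ·) ⊥ := by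
  rw [delta0, show w.prod = Word.equiv.symm w from rfl, Equiv.apply_symm_apply]

theorem delta0_list_prod_le {L : List (Σ _ : I₀, Λ)} {c : I₀} (hL : ∀ l ∈ L, l.1 ≤ c) :
    delta0 (L.map fun l => of (i := l.1) l.2).prod ≤ c :=
  delta0_le_iff.2 <| Word.forall_fst_list_prod_smul (p := (· ≤ c)) (L := L) (w := Word.empty) hL
    fun _ h => absurd h List.not_mem_nil

theorem delta0_one : delta0 (1 : CoprodI fun _ : I₀ => Λ) = ⊥ :=
  le_bot_iff.1 <| delta0_list_prod_le (L := []) (by simp)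

theorem delta0_mul_le (x y : CoprodI fun _ : I₀ => Λ) : delta0 (x * y) ≤ delta0 x ⊔ delta0 y := by
  conv_lhs => rw [← Word.list_prod_equiv x, ← Word.list_prod_equiv y,
    ← List.prod_append, ← List.map_append]
  refine delta0_list_prod_le fun l hl => ?_
  rcases List.mem_append.1 hl with hl | hl
  · exact le_sup_of_le_left (delta0_le_iff.1 le_rfl l hl)
  · exact le_sup_of_le_right (delta0_le_iff.1 le_rfl l hl)

theorem delta0_inv_le (x : CoprodI fun _ : I₀ => Λ) : delta0 x⁻¹ ≤ delta0 x := by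
  have hinv : x⁻¹ = (((Word.equiv x).toList.map fun l => (⟨l.1, l.2⁻¹⟩ : Σ _ : I₀, Λ)).reverse.map
      fun l => of (i := l.1) l.2).prod := by
    conv_lhs => rw [← Word.list_prod_equiv x]
    simp [List.prod_inv_reverse, List.map_reverse, Function.comp_def]
  rw [hinv]
  refine delta0_list_prod_le fun l hl => ?_
  obtain ⟨l', hl', rfl⟩ := List.mem_map.1 (List.mem_reverse.1 hl)
  exact delta0_le_iff.1 le_rfl l' hl'

theorem delta0_inv (x : CoprodI fun _ : I₀ => Λ) : delta0 x⁻¹ = delta0 x :=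
  (delta0_inv_le x).antisymm (by simpa using delta0_inv_le x⁻¹)

theorem delta0_list_prod_of_isChain {L : List (Σ _ : I₀, Λ)} (hne : ∀ l ∈ L, l.2 ≠ 1)
    (hchain : L.IsChain fun l l' => l.1 ≠ l'.1) :
    delta0 (L.map fun l => of (i := l.1) l.2).prod = (L.map Sigma.fst).foldr (· ⊔ ·) ⊥ :=
  delta0_word_prod ⟨L, hne, hchain⟩

section Letters

variable {k : Λ} (hk : k ≠ 1)
include hk

theorem delta0_of (a : I₀) : delta0 (of (i := a) k) = a := by
  simpa using delta0_list_prod_of_isChain (L := [⟨a, k⟩]) (by simpa using hk)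
    (List.isChain_singleton _)

theorem delta0_of_mul_of {a b : I₀} (hab : a ≠ b) :
    delta0 (of (i := a) k * of (i := b) k) = a ⊔ b := by
  simpa using delta0_list_prod_of_isChain (L := [⟨a, k⟩, ⟨b, k⟩]) (by simpa using hk)
    (by simpa using hab)

theorem delta0_of_mul_of_mul_of {a b c : I₀} (hab : a ≠ b) (hbc : b ≠ c) :
    delta0 (of (i := a) k * (of (i := b) k * of (i := c) k)) = a ⊔ b ⊔ c := by
  simpa [sup_assoc] using delta0_list_prod_of_isChain (L := [⟨a, k⟩, ⟨b, k⟩, ⟨c, k⟩])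
    (by simpa using hk) (by simpa using ⟨hab, hbc⟩)

end Letters

theorem delta0_surjective [Nontrivial Λ] : Function.Surjective (delta0 (I₀ := I₀) (Λ := Λ)) :=
  let ⟨_, hk⟩ := exists_ne (1 : Λ)
  fun a => ⟨of _, delta0_of hk a⟩

theorem exists_delta0_mul_eq_sup [Nontrivial Λ] (a b : I₀) :
    ∃ g h : CoprodI (fun _ : I₀ => Λ), delta0 g = a ∧ delta0 h = b ∧ delta0 (g * h) = a ⊔ b := by
  obtain ⟨k, hk⟩ := exists_ne (1 : Λ)
  rcases eq_or_ne a ⊥ with rfl | ha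
  · exact ⟨1, of k, delta0_one, delta0_of hk b, by simp [delta0_of hk]⟩
  rcases eq_or_ne b ⊥ with rfl | hb
  · exact ⟨of k, 1, delta0_of hk a, delta0_one, by simp [delta0_of hk]⟩
  refine ⟨of k, of (i := ⊥) k * of (i := b) k, delta0_of hk a, ?_, ?_⟩
  · simpa using delta0_of_mul_of hk hb.symm
  · simpa using delta0_of_mul_of_mul_of hk ha hb.symm

end Delta0

/-- Let `I₀` be a join-semilattice with `0`, `Λ` a nontrivial group and
`G₀ = ∗_{a ∈ I₀} Λ_a`. Then (i) `δ₀` is a valuation; (ii) `δ₀` is surjective; and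
(iii) for all `a, b ∈ I₀` there are `g, h ∈ G₀` with `δ₀ g = a`, `δ₀ h = b` and
`δ₀ (g * h) = a ⊔ b`. -/
theorem stmt12 {I₀ : Type*} [SemilatticeSup I₀] [OrderBot I₀] [DecidableEq I₀]
    {Λ : Type*} [Group Λ] [Nontrivial Λ] [DecidableEq Λ] :
    -- (i) δ₀ is a valuation
    (delta0 (1 : Monoid.CoprodI (fun _ : I₀ => Λ)) = ⊥) ∧
    (∀ x : Monoid.CoprodI (fun _ : I₀ => Λ), delta0 x⁻¹ = delta0 x) ∧
    (∀ x y : Monoid.CoprodI (fun _ : I₀ => Λ), delta0 (x * y) ≤ delta0 x ⊔ delta0 y) ∧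
    -- (ii) δ₀ is surjective
    Function.Surjective (delta0 (I₀ := I₀) (Λ := Λ)) ∧
    -- (iii)
    (∀ a b : I₀, ∃ g h : Monoid.CoprodI (fun _ : I₀ => Λ),
      delta0 g = a ∧ delta0 h = b ∧ delta0 (g * h) = a ⊔ b) := by
  exact ⟨delta0_one, delta0_inv, delta0_mul_le, delta0_surjective, exists_delta0_mul_eq_sup⟩
end

section
/- Let K be a group, (I₀, ≤, ∨, 0) a join-semilattice with 0, and δ : K → I₀ a surjective valuation. Write L = { g ∈ K : δ(g) = 0 }. Assume: (a) for all g, h ∈ K with δ(h) ≤ δ(g), one has h ∈ ⟨L, gLg⁻¹⟩; (b) for all a, b ∈ I₀ there exist g, h ∈ K with δ(g) = a, δ(h) = b, δ(gh) = a ∨ b. Then the map J ↦ K(J) = δ⁻¹(J) is an inclusion-preserving bijection from the set of ideals of I₀ onto the set of subgroups S with L ≤ S ≤ K. -/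
/-- An ideal of a join-semilattice: a nonempty, downward closed subset that is closed
under joins. -/
def IsSemilatticeIdeal {I₀ : Type*} [SemilatticeSup I₀] (J : Set I₀) : Prop :=
  J.Nonempty ∧ (∀ x a : I₀, a ∈ J → x ≤ a → x ∈ J) ∧ (∀ a ∈ J, ∀ b ∈ J, a ⊔ b ∈ J)

/-- Let `δ : K → I₀` be a surjective valuation, `L = {g | δ g = ⊥}`, and
assume (a) whenever `δ h ≤ δ g`, `h` lies in the subgroup generated by `L` and `g L g⁻¹`,
and (b) for all `a, b ∈ I₀` there are `g, h` with `δ g = a`, `δ h = b`, `δ (g h) = a ⊔ b`.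
Then `J ↦ K(J) = δ⁻¹(J)` is an inclusion-preserving bijection from the ideals of `I₀` onto
the subgroups `S` with `L ≤ S ≤ K`. -/
theorem stmt13 {K : Type*} [Group K] {I₀ : Type*} [SemilatticeSup I₀] [OrderBot I₀]
    (δ : K → I₀) (h1 : δ 1 = ⊥) (hinv : ∀ g : K, δ g⁻¹ = δ g)
    (hmul : ∀ g h : K, δ (g * h) ≤ δ g ⊔ δ h) (hsurj : Function.Surjective δ)
    (ha : ∀ g h : K, δ h ≤ δ g →
      h ∈ Subgroup.closure ({k : K | δ k = ⊥} ∪ (fun l => g * l * g⁻¹) '' {k : K | δ k = ⊥}))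
    (hb : ∀ a b : I₀, ∃ g h : K, δ g = a ∧ δ h = b ∧ δ (g * h) = a ⊔ b) :
    -- every ideal gives an intermediate subgroup
    (∀ J : Set I₀, IsSemilatticeIdeal J →
      ∃ S : Subgroup K, {g : K | δ g = ⊥} ⊆ (S : Set K) ∧ (S : Set K) = δ ⁻¹' J) ∧
    -- the correspondence preserves and reflects inclusion (hence is injective)
    (∀ J₁ J₂ : Set I₀, IsSemilatticeIdeal J₁ → IsSemilatticeIdeal J₂ →
      (δ ⁻¹' J₁ ⊆ δ ⁻¹' J₂ ↔ J₁ ⊆ J₂)) ∧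
    -- every intermediate subgroup arises from an ideal
    (∀ S : Subgroup K, {g : K | δ g = ⊥} ⊆ (S : Set K) →
      ∃ J : Set I₀, IsSemilatticeIdeal J ∧ (S : Set K) = δ ⁻¹' J) := by
  refine ⟨?_, ?_, ?_⟩
  · rintro J ⟨⟨a0, ha0⟩, hdown, hjoin⟩
    have hbot : ∀ x : K, δ x = ⊥ → δ x ∈ J := fun x hx => hx ▸ hdown ⊥ a0 ha0 bot_le
    refine ⟨⟨⟨⟨δ ⁻¹' J, ?_⟩, ?_⟩, ?_⟩, ?_, rfl⟩
    · intro g h hg hh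
      exact hdown _ _ (hjoin _ hg _ hh) (hmul g h)
    · show δ 1 ∈ J
      exact hbot 1 h1
    · intro g hg
      simpa [hinv g] using hg
    · intro g hg
      exact hbot g hg
  · intro J₁ J₂ h₁ h₂
    constructor
    · intro hsub a haJ
      obtain ⟨g, rfl⟩ := hsurj a
      exact hsub haJ
    · intro hsub g hg
      exact hsub hg
  · intro S hLS
    -- key: if g ∈ S then closure (L ∪ gLg⁻¹) ≤ S
    have key : ∀ g : K, g ∈ S → ∀ h : K, δ h ≤ δ g → h ∈ S := by
      intro g hg h hle
      have : Subgroup.closure ({k : K | δ k = ⊥} ∪ (fun l => g * l * g⁻¹) '' {k : K | δ k = ⊥})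
          ≤ S := by
        rw [Subgroup.closure_le]
        rintro x (hx | ⟨l, hl, rfl⟩)
        · exact hLS hx
        · exact S.mul_mem (S.mul_mem hg (hLS hl)) (S.inv_mem hg)
      exact this (ha g h hle)
    refine ⟨δ '' (S : Set K), ⟨⟨⊥, 1, S.one_mem, h1⟩, ?_, ?_⟩, ?_⟩
    · rintro x a ⟨g, hg, rfl⟩ hle
      obtain ⟨h, rfl⟩ := hsurj x
      exact ⟨h, key g hg h hle, rfl⟩
    · rintro a ⟨g, hg, rfl⟩ b ⟨h, hh, rfl⟩
      obtain ⟨g', h', hg', hh', hgh'⟩ := hb (δ g) (δ h)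
      have hg'S : g' ∈ S := key g hg g' hg'.le
      have hh'S : h' ∈ S := key h hh h' hh'.le
      exact ⟨g' * h', S.mul_mem hg'S hh'S, hgh'⟩
    · ext k
      constructor
      · intro hk
        exact ⟨k, hk, rfl⟩
      · rintro ⟨g, hg, hgk⟩
        exact key g hg k hgk.ge
end
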